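/- arXiv:2405.09961 — 12 statements merged into one kernel-verified Lean document; each statement's English description precedes it below -/
import Mathlib

section
/- If R is a GNC ring, then every element of R is clean; that is, R is a clean ring. -/
/-- An element is nil-clean if it is the sum of an idempotent and a nilpotent. -/
def IsNilClean {R : Type*} [Ring R] (a : R) : Prop :=
  ∃ e q : R, IsIdempotentElem e ∧ IsNilpotent q ∧ a = e + q

/-- A ring is GNC (generalized nil-clean) if every non-unit is nil-clean. -/
def IsGNC (R : Type*) [Ring R] : Prop :=
  ∀ a : R, ¬ IsUnit a → IsNilClean a

/-! Split `a` as `1 + (a - 1)`: if `a - 1` is a unit, `a` is clean with idempotent `1`; otherwise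
`a - 1 = e + q` is nil-clean and `a = e + (1 + q)` with `1 + q` a unit. -/

def IsClean {R : Type*} [Ring R] (a : R) : Prop :=
  ∃ e u : R, IsIdempotentElem e ∧ IsUnit u ∧ a = e + u

section Clean

variable {R : Type*} [Ring R] {a : R}

theorem IsClean.of_isUnit_sub_one (h : IsUnit (a - 1)) : IsClean a :=
  ⟨1, a - 1, .one, h, (add_sub_cancel 1 a).symm⟩

theorem IsNilClean.isClean_add_one (h : IsNilClean a) : IsClean (a + 1) := by
  obtain ⟨e, q, he, hq, rfl⟩ := h
  exact ⟨e, 1 + q, he, hq.isUnit_one_add, by abel⟩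

theorem IsClean.of_isNilClean_sub_one (h : IsNilClean (a - 1)) : IsClean a := by
  simpa using h.isClean_add_one

end Clean

theorem gnc_is_clean {R : Type*} [Ring R] (h : IsGNC R) :
    ∀ a : R, ∃ e u : R, IsIdempotentElem e ∧ IsUnit u ∧ a = e + u := by
  intro a
  by_cases hu : IsUnit (a - 1)
  · exact IsClean.of_isUnit_sub_one hu
  · exact IsClean.of_isNilClean_sub_one (h (a - 1) hu)
end

section
/- If R is a GNC ring, then the Jacobson radical J(R) is nil, i.e., every element of J(R) is nilpotent. -/
theorem gnc_jacobson_nil {R : Type*} [Ring R] (h : IsGNC R) :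
    ∀ x ∈ ((⊥ : Ideal R).jacobson), IsNilpotent x := by
  intro x hx
  by_cases hu : IsUnit x
  · -- then 1 ∈ jacobson ⊥, so ⊥ = ⊤, so R trivial
    obtain ⟨u, rfl⟩ := hu
    have h1 : (1 : R) ∈ ((⊥ : Ideal R).jacobson) := by
      have := Ideal.mul_mem_left _ (↑u⁻¹) hx
      simpa using this
    have htop : ((⊥ : Ideal R).jacobson) = ⊤ := by
      rwa [Ideal.eq_top_iff_one]
    have hbot : (⊥ : Ideal R) = ⊤ := Ideal.jacobson_eq_top_iff.mp htop
    have h10 : (1 : R) = 0 := by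
      have : (1 : R) ∈ (⊥ : Ideal R) := hbot ▸ Submodule.mem_top
      simpa using this
    have hu0 : (u : R) = 0 := by rw [← mul_one (u : R), h10, mul_zero]
    exact ⟨1, by simp [hu0]⟩
  · obtain ⟨e, q, he, hq, hxeq⟩ := h x hu
    -- e = x - q; e² = e ⇒ (1+q) e = x e
    have key : (1 + q) * e = x * e := by
      have h1 : e * e = e := he
      have h2 : e = x - q := by rw [hxeq]; abel
      calc (1 + q) * e = e + q * e := by noncomm_ring
        _ = e * e + q * e := by rw [h1]
        _ = (x - q) * e + q * e := by rw [← h2]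
        _ = x * e := by noncomm_ring
    obtain ⟨u, hu1⟩ := hq.isUnit_one_add
    set a : R := ↑u⁻¹ * x with ha
    have haJ : a ∈ ((⊥ : Ideal R).jacobson) := Ideal.mul_mem_left _ _ hx
    have hae : a * e = e := by
      have : (↑u⁻¹ : R) * ((1 + q) * e) = (↑u⁻¹ : R) * (x * e) := by rw [key]
      rw [← mul_assoc, ← mul_assoc, ← hu1, Units.inv_mul, one_mul] at this
      rw [ha, mul_assoc, ← mul_assoc, ← this]
    -- (1 - a) has a left inverse since a ∈ J
    have hmem : (1 - a) - 1 ∈ ((⊥ : Ideal R).jacobson) := by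
      simpa using ((⊥ : Ideal R).jacobson).neg_mem haJ
    obtain ⟨s, hs⟩ := Ideal.exists_mul_sub_mem_of_sub_one_mem_jacobson _ hmem
    rw [Ideal.mem_bot, sub_eq_zero] at hs
    have he0 : e = 0 := by
      have h0 : (1 - a) * e = 0 := by rw [sub_mul, one_mul, hae, sub_self]
      calc e = 1 * e := (one_mul e).symm
        _ = (s * (1 - a)) * e := by rw [hs]
        _ = s * ((1 - a) * e) := by rw [mul_assoc]
        _ = 0 := by rw [h0, mul_zero]
    rw [hxeq, he0, zero_add]
    exact hq
end

section
/- For any ring R, the Laurent polynomial element 1 + x is not nil-clean in R[x, x^{-1}]; in particular, R[x, x^{-1}] is not a GNC ring. -/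
/-!
If `1 + t = e + q` with `t` a central unit, `e` idempotent and `q` nilpotent, then `e` commutes
with `q` and `e * q = e * t`, so `e * t` and hence `e` is nilpotent; being idempotent, `e = 0`,
and `1 + t = q` is nilpotent. For `t = T 1` this is impossible, as `(1 + X) ^ n` has constant
coefficient `1`. Finally `1 + T 1` is not a unit: evaluation at the central unit `-1` is a ring
homomorphism killing it.
-/

theorem IsNilClean.isNilpotent_one_add {A : Type*} [Ring A] {t : A}
    (ht : ∀ x, Commute t x) (htu : IsUnit t) (h : IsNilClean (1 + t)) : IsNilpotent (1 + t) := by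
  obtain ⟨e, q, he, hq, heq⟩ := h
  have hq_eq : q = 1 + t - e := by rw [heq, add_sub_cancel_left]
  have he_comm_q : Commute e q :=
    hq_eq ▸ ((Commute.one_right e).add_right (ht e).symm).sub_right (Commute.refl e)
  have he_mul_q : e * q = e * t := by
    rw [hq_eq, mul_sub, mul_add, mul_one, he.eq, add_sub_cancel_left]
  have he_zero : e = 0 := he.eq_zero_of_isNilpotent <|
    ((ht e).symm.isNilpotent_mul_right_iff htu.mem_nonZeroDivisors.2).1
      (he_mul_q ▸ he_comm_q.isNilpotent_mul_left hq)
  rwa [heq, he_zero, zero_add]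

namespace LaurentPolynomial

open Polynomial

variable {R : Type*} [Ring R]

theorem not_isNilpotent_one_add_T [Nontrivial R] : ¬ IsNilpotent (1 + T 1 : R[T;T⁻¹]) := by
  rw [← toLaurent_one, ← toLaurent_X, ← map_add,
    IsNilpotent.map_iff Polynomial.toLaurent_injective]
  exact fun h => not_isNilpotent_one (by simpa using h.map Polynomial.constantCoeff)

noncomputable def evalUnit (x : Rˣ) (hx : ∀ r : R, Commute r x) : R[T;T⁻¹] →+* R :=
  AddMonoidAlgebra.liftNCRingHom (RingHom.id R) ((Units.coeHom R).comp (zpowersHom Rˣ x))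
    fun r n => (hx r).units_zpow_right n.toAdd

@[simp]
theorem evalUnit_T (x : Rˣ) (hx : ∀ r : R, Commute r x) (n : ℤ) :
    evalUnit x hx (T n) = ↑(x ^ n) :=
  (AddMonoidAlgebra.liftNCRingHom_single _ _ _ _ _).trans (one_mul _)

theorem not_isUnit_one_add_T [Nontrivial R] : ¬ IsUnit (1 + T 1 : R[T;T⁻¹]) := fun h => by
  simpa using h.map (evalUnit (-1) Commute.neg_one_right)

end LaurentPolynomial

open LaurentPolynomial

theorem laurent_not_gnc {R : Type*} [Ring R] [Nontrivial R] :
    ¬ IsNilClean ((1 + LaurentPolynomial.T 1 : LaurentPolynomial R)) ∧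
      ¬ IsGNC (LaurentPolynomial R) := by
  have h_not_nilClean : ¬ IsNilClean (1 + T 1 : R[T;T⁻¹]) := fun h =>
    not_isNilpotent_one_add_T (h.isNilpotent_one_add (commute_T 1) (isUnit_T 1))
  exact ⟨h_not_nilClean, fun hGNC => h_not_nilClean (hGNC _ not_isUnit_one_add_T)⟩
end

section
/- For any ring R, the formal power series ring R[[x]] is not a GNC ring (since x lies in J(R[[x]]) but is not nilpotent). -/
namespace PowerSeries

variable {R : Type*} [Ring R]

theorem eq_zero_of_isIdempotentElem_of_constantCoeff_eq_zero {e : R⟦X⟧}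
    (he : IsIdempotentElem e) (h0 : constantCoeff e = 0) : e = 0 := by
  have hunit : IsUnit (1 - e) := isUnit_iff_constantCoeff.mpr (by simp [h0])
  have hone : 1 - e = 1 := (IsIdempotentElem.iff_eq_one_of_isUnit hunit).mp he.one_sub
  simpa using hone

theorem isNilpotent_of_isNilClean_of_constantCoeff_eq_zero {a : R⟦X⟧} (ha : IsNilClean a)
    (h0 : constantCoeff a = 0) : IsNilpotent a := by
  obtain ⟨e, q, he, hq, rfl⟩ := ha
  have hce : constantCoeff e = -constantCoeff q :=
    eq_neg_of_add_eq_zero_left (by simpa using h0)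
  have hce0 : constantCoeff e = 0 :=
    (he.map constantCoeff).eq_zero_of_isNilpotent (hce ▸ (hq.map constantCoeff).neg)
  rwa [eq_zero_of_isIdempotentElem_of_constantCoeff_eq_zero he hce0, zero_add]

theorem not_isUnit_X [Nontrivial R] : ¬ IsUnit (X : R⟦X⟧) := by
  simp [isUnit_iff_constantCoeff]

theorem not_isNilpotent_X [Nontrivial R] : ¬ IsNilpotent (X : R⟦X⟧) := by
  rintro ⟨n, hn⟩
  simpa using congrArg (coeff n) hn

end PowerSeries

theorem powerSeries_not_gnc {R : Type*} [Ring R] [Nontrivial R] :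
    ¬ IsGNC (PowerSeries R) := fun h =>
  PowerSeries.not_isNilpotent_X <|
    PowerSeries.isNilpotent_of_isNilClean_of_constantCoeff_eq_zero
      (h _ PowerSeries.not_isUnit_X) PowerSeries.constantCoeff_X
end

section
/- Let R be a GNC ring. Then for every natural number n, the element n·1 of R is either nilpotent or a unit. -/
/-!
If `a = e + q` is nil-clean and central, then `e` commutes with `q = a - e`, and idempotence of `e`
makes `a (a - 1) = q (2e + q - 1)` nilpotent. In a GNC ring this applies to every central non-unit:
to `a` and `-a` it shows that `2a = a (a + 1) - a (a - 1)` is nilpotent, and to `2` that `2` is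
nilpotent unless it is a unit. If `2` is a unit, a non-unit `n` is thus nilpotent; if `2` is
nilpotent, an even `n` is nilpotent and an odd `n`, being coprime to `2`, is a unit.
-/

section

variable {R : Type*} [Ring R]

theorem IsIdempotentElem.isNilpotent_add_mul_add_sub_one {e q : R} (he : IsIdempotentElem e)
    (hq : IsNilpotent q) (heq : Commute e q) : IsNilpotent ((e + q) * (e + q - 1)) := by
  have hexpand : (e + q) * (e + q - 1) = q * (2 * e + q - 1) := by
    calc (e + q) * (e + q - 1) = e * e - e + e * q + q * e + q * q - q := by noncomm_ring
      _ = q * (2 * e + q - 1) := by rw [he.eq, heq.eq]; noncomm_ring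
  rw [hexpand]
  refine Commute.isNilpotent_mul_right ?_ hq
  exact (((Commute.ofNat_right q 2).mul_right heq.symm).add_right (Commute.refl q)).sub_right
    (Commute.one_right q)

theorem IsNilClean.isNilpotent_mul_sub_one {a : R} (ha : IsNilClean a)
    (hc : ∀ b : R, Commute a b) : IsNilpotent (a * (a - 1)) := by
  obtain ⟨e, q, he, hq, rfl⟩ := ha
  have heq : Commute e q := by
    simpa using (hc e).symm.sub_right (Commute.refl e)
  exact he.isNilpotent_add_mul_add_sub_one hq heq

theorem Nat.Coprime.isUnit_natCast_of_isNilpotent {m k : ℕ} (hmk : m.Coprime k)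
    (hm : IsNilpotent (m : R)) : IsUnit (k : R) := by
  have hbezout : ((m * Nat.gcdA m k + k * Nat.gcdB m k : ℤ) : R) = 1 := by
    rw [← Nat.gcd_eq_gcd_ab, hmk, Nat.cast_one, Int.cast_one]
  push_cast at hbezout
  have hunit : IsUnit ((k : R) * Nat.gcdB m k) := by
    rw [eq_sub_of_add_eq' hbezout]
    exact (Commute.isNilpotent_mul_right (Int.cast_commute _ _).symm hm).isUnit_one_sub
  exact ((Nat.cast_commute k _).isUnit_mul_iff.mp hunit).1

namespace IsGNC

theorem isNilpotent_mul_sub_one (hR : IsGNC R) {a : R} (hc : ∀ b : R, Commute a b)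
    (hu : ¬IsUnit a) : IsNilpotent (a * (a - 1)) :=
  (hR a hu).isNilpotent_mul_sub_one hc

theorem isNilpotent_two_mul (hR : IsGNC R) {a : R} (hc : ∀ b : R, Commute a b)
    (hu : ¬IsUnit a) : IsNilpotent (2 * a) := by
  have hsub := hR.isNilpotent_mul_sub_one hc hu
  have hadd : IsNilpotent (a * (a + 1)) := by
    have := hR.isNilpotent_mul_sub_one (fun b => (hc b).neg_left)
      (fun h => hu (by simpa using h.neg))
    rwa [show -a * (-a - 1) = a * (a + 1) by noncomm_ring] at this
  have hcomm : Commute (a * (a + 1)) (a * (a - 1)) :=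
    (hc _).mul_left ((hc _).add_left (Commute.one_left _))
  have htwo : a * (a + 1) - a * (a - 1) = 2 * a := by noncomm_ring
  exact htwo ▸ Commute.isNilpotent_sub hcomm hadd hsub

theorem isNilpotent_or_isUnit_two (hR : IsGNC R) : IsNilpotent (2 : R) ∨ IsUnit (2 : R) := by
  by_cases h2 : IsUnit (2 : R)
  · exact Or.inr h2
  · have := hR.isNilpotent_mul_sub_one (Nat.cast_commute 2) h2
    norm_num at this
    exact Or.inl this

end IsGNC

end

theorem gnc_nat_nilpotent_or_unit {R : Type*} [Ring R] (h : IsGNC R) :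
    ∀ n : ℕ, IsNilpotent (n : R) ∨ IsUnit (n : R) := by
  intro n
  by_cases hn : IsUnit (n : R)
  · exact Or.inr hn
  left
  rcases h.isNilpotent_or_isUnit_two with h2 | h2
  · rcases Nat.even_or_odd n with ⟨m, rfl⟩ | hodd
    · rw [← two_mul, Nat.cast_mul, Nat.cast_ofNat]
      exact Commute.isNilpotent_mul_right (Nat.cast_commute 2 _) h2
    · have hunit := (Nat.coprime_two_left.mpr hodd).isUnit_natCast_of_isNilpotent
        (R := R) (by exact_mod_cast h2)
      exact absurd hunit hn
  · have h2n := h.isNilpotent_two_mul (Nat.cast_commute n) hn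
    exact (h2.isNilpotent_unit_mul_of_commute_iff (Nat.cast_commute n 2)).mp h2n
end

section
/- Let R be a GNC ring in which 2 is a unit and u^2 = 1 for every unit u of R. Then R is commutative. -/
theorem gnc_units_sq_one_comm {R : Type*} [Ring R] (h : IsGNC R)
    (h2 : IsUnit (2 : R)) (hu : ∀ u : R, IsUnit u → u ^ 2 = 1) :
    ∀ x y : R, x * y = y * x := by
  have h4 : (2 : R) * 2 = 1 := by have := hu 2 h2; rwa [pow_two] at this
  have h3 : (3 : R) = 0 := by
    apply add_right_cancel (b := (1 : R))
    rw [show (3:R) + 1 = 2 * 2 from by norm_num, h4, zero_add]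
  have h2eq : (2 : R) = -1 :=
    eq_neg_of_add_eq_zero_left (by rw [show (2:R) + 1 = 3 from by norm_num]; exact h3)
  -- all nilpotents are zero
  have hred : ∀ q : R, IsNilpotent q → q = 0 := by
    intro q hq
    have hu1 : IsUnit (1 + q) := hq.isUnit_one_add
    have hsq : (1 + q) ^ 2 = 1 := hu _ hu1
    have e1 : (1 + q) ^ 2 = 1 + (2 * q + q * q) := by noncomm_ring
    rw [e1] at hsq
    have h6 : 2 * q + q * q = 0 := by
      nth_rewrite 2 [← add_zero (1 : R)] at hsq
      exact add_left_cancel hsq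
    have hqq : q * q = q := by
      have : q * q = -(2 * q) := eq_neg_of_add_eq_zero_right h6
      rw [this, h2eq]; simp
    obtain ⟨n, hn⟩ := hq
    have hpow : ∀ k : ℕ, q ^ (k + 1) = q := by
      intro k
      induction k with
      | zero => simp
      | succ k ih => rw [pow_succ, ih, hqq]
    have := hpow n
    rw [pow_succ, hn, zero_mul] at this
    exact this.symm
  -- idempotents are central
  have hidem : ∀ e : R, IsIdempotentElem e → ∀ x : R, e * x = x * e := by
    intro e he x
    have he' : e * e = e := he
    have h1 : e * x - e * x * e = 0 := by
      apply hred
      refine ⟨2, ?_⟩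
      have key : (e * x - e * x * e) ^ 2 =
          e * x * e * x - e * x * e * x * e - e * x * (e * e) * x
            + e * x * (e * e) * x * e := by noncomm_ring
      rw [key, he']
      noncomm_ring
    have h2' : x * e - e * x * e = 0 := by
      apply hred
      refine ⟨2, ?_⟩
      have key : (x * e - e * x * e) ^ 2 =
          x * e * x * e - x * (e * e) * x * e - e * x * e * x * e
            + e * x * (e * e) * x * e := by noncomm_ring
      rw [key, he']
      noncomm_ring
    have e1 := sub_eq_zero.mp h1
    have e2 := sub_eq_zero.mp h2'
    rw [e1, ← e2]
  -- every non-unit is idempotent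
  have hnu : ∀ x : R, ¬ IsUnit x → IsIdempotentElem x := by
    intro x hx
    obtain ⟨e, q, he, hq, hxe⟩ := h x hx
    rw [hred q hq, add_zero] at hxe
    rw [hxe]; exact he
  intro x y
  by_cases hx : IsUnit x
  · by_cases hy : IsUnit y
    · have hxy : IsUnit (x * y) := hx.mul hy
      have h1 : x * y * (x * y) = 1 := by have := hu _ hxy; rwa [pow_two] at this
      have hx2 : x * x = 1 := by have := hu _ hx; rwa [pow_two] at this
      have hy2 : y * y = 1 := by have := hu _ hy; rwa [pow_two] at this
      calc x * y = x * (x * y * (x * y)) * y := by rw [h1]; noncomm_ring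
        _ = (x * x) * (y * x) * (y * y) := by noncomm_ring
        _ = y * x := by rw [hx2, hy2]; noncomm_ring
    · exact (hidem y (hnu y hy) x).symm
  · exact hidem x (hnu x hx) y
end

section
/- Let R be a GNC ring in which 2 is a unit and u^2 = 1 for every unit u of R. Then R is a field. -/
theorem gnc_units_sq_one_field {R : Type*} [Ring R] [Nontrivial R] (h : IsGNC R)
    (h2 : IsUnit (2 : R)) (hu : ∀ u : R, IsUnit u → u ^ 2 = 1) :
    IsField R := by
  -- (2)^2 = 1, hence 4 = 1
  have h4 : (4 : R) = 1 := by
    have h22 := hu 2 h2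
    have h22' : (2 : R) * 2 = 1 := by rwa [pow_two] at h22
    calc (4 : R) = 2 * 2 := by norm_num
    _ = 1 := h22'
  -- all nilpotents are zero
  have hnil : ∀ q : R, IsNilpotent q → q = 0 := by
    intro q hq
    have hcomm : Commute q (2 : R) := Commute.ofNat_right q 2
    have hu2q : IsUnit ((2 : R) + q) := hq.isUnit_add_left_of_commute h2 hcomm
    have h1q : IsUnit (1 + q) := by
      have := hq.isUnit_add_one
      rwa [add_comm] at this
    have hsq : (1 + q) * (1 + q) = 1 := by
      have := hu _ h1q; rwa [pow_two] at this
    have key : q * (2 + q) = 0 := by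
      calc q * (2 + q) = (1 + q) * (1 + q) - 1 := by noncomm_ring
      _ = 0 := by rw [hsq, sub_self]
    obtain ⟨v, hv⟩ := hu2q.exists_right_inv
    calc q = q * ((2 + q) * v) := by rw [hv, mul_one]
    _ = q * (2 + q) * v := by rw [mul_assoc]
    _ = 0 := by rw [key, zero_mul]
  -- every nonunit is zero
  have hz : ∀ a : R, ¬ IsUnit a → a = 0 := by
    intro a ha
    obtain ⟨e, q, he, hq, hae⟩ := h a ha
    have hq0 : q = 0 := hnil q hq
    subst hq0
    rw [add_zero] at hae
    subst hae
    -- a is idempotent; 2a is a nonunit hence idempotent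
    have h2a : ¬ IsUnit ((2 : R) * a) := by
      intro hun
      apply ha
      have hx := (h2.unit⁻¹.isUnit).mul hun
      rwa [← mul_assoc, IsUnit.val_inv_mul, one_mul] at hx
    obtain ⟨f, p, hf, hp, h2af⟩ := h _ h2a
    have hp0 : p = 0 := hnil p hp
    subst hp0
    rw [add_zero] at h2af
    have hidem2 : ((2:R) * a) * ((2:R) * a) = (2:R) * a := by
      rw [h2af]; exact hf
    have key : a = 2 * a := by
      calc a = (4 : R) * (a * a) := by rw [h4, one_mul, he]
      _ = (2 * a) * (2 * a) := by noncomm_ring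
      _ = 2 * a := hidem2
    have h' : a = 2 * a - a := by noncomm_ring
    rw [h', ← key, sub_self]
  refine ⟨exists_pair_ne R, ?_, ?_⟩
  · -- commutativity: units have square 1, so ab = ba
    intro x y
    by_cases hx : IsUnit x
    · by_cases hy : IsUnit y
      · have hxy : IsUnit (x * y) := hx.mul hy
        have h1 : x * y * (x * y) = 1 := by have := hu _ hxy; rwa [pow_two] at this
        have hx2 : x * x = 1 := by have := hu _ hx; rwa [pow_two] at this
        have hy2 : y * y = 1 := by have := hu _ hy; rwa [pow_two] at this
        have key : y * x = x * y := by
          calc y * x = (x * x) * (y * x) * (y * y) := by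
                rw [hx2, hy2, one_mul, mul_one]
          _ = x * (x * y * (x * y)) * y := by noncomm_ring
          _ = x * y := by rw [h1, mul_one]
        exact key.symm
      · rw [hz y hy, mul_zero, zero_mul]
    · rw [hz x hx, zero_mul, mul_zero]
  · intro a ha
    by_cases hau : IsUnit a
    · obtain ⟨b, hb⟩ := hau.exists_right_inv
      exact ⟨b, hb⟩
    · exact absurd (hz a hau) ha
end

section
/- If R is a GNC ring, then Nil(R) + J(R) = Nil(R); that is, the sum of a nilpotent element and an element of the Jacobson radical is nilpotent. -/
/-!
In a GNC ring the Jacobson radical `J` is nil. A unit in `J` only exists in the zero ring, and a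
non-unit `x = e + q ∈ J` has `e ≡ -q` modulo `J`, so `e` is an idempotent that is nilpotent
modulo `J`, hence lies in `J`, hence is `0`; thus `x = q`. Now if `a` is nilpotent and `b ∈ J`,
then `a + b ≡ a` is nilpotent modulo the nil ideal `J`, so `a + b` is nilpotent.
-/

section

variable {R : Type*} [Ring R]

theorem IsNilpotent.of_isNilpotent_quotient_mk {I : Ideal R} [I.IsTwoSided]
    (hI : ∀ x ∈ I, IsNilpotent x) {x : R} (hx : IsNilpotent (Ideal.Quotient.mk I x)) :
    IsNilpotent x := by
  obtain ⟨n, hn⟩ := hx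
  rw [← map_pow, Ideal.Quotient.eq_zero_iff_mem] at hn
  exact (hI _ hn).of_pow

theorem IsNilpotent.add_of_mem_of_forall_isNilpotent {I : Ideal R} [I.IsTwoSided]
    (hI : ∀ x ∈ I, IsNilpotent x) {a b : R} (ha : IsNilpotent a) (hb : b ∈ I) :
    IsNilpotent (a + b) := by
  refine .of_isNilpotent_quotient_mk hI ?_
  rw [map_add, Ideal.Quotient.eq_zero_iff_mem.mpr hb, add_zero]
  exact ha.map _

theorem IsIdempotentElem.eq_zero_of_mem_jacobson_bot {e : R} (he : IsIdempotentElem e)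
    (hJ : e ∈ (⊥ : Ideal R).jacobson) : e = 0 := by
  obtain ⟨z, hz⟩ := Ideal.mem_jacobson_iff.mp hJ (-1)
  rw [Ideal.mem_bot, sub_eq_zero] at hz
  -- `z * (1 - e) = 1`, and `(1 - e) * e = 0`
  calc e = (z * -1 * e + z) * e := by rw [hz, one_mul]
    _ = 0 := by rw [add_mul, mul_assoc, he.eq, mul_neg_one, neg_mul, neg_add_cancel]

theorem IsNilClean.isNilpotent_of_mem_jacobson_bot {x : R} (hx : IsNilClean x)
    (hJ : x ∈ (⊥ : Ideal R).jacobson) : IsNilpotent x := by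
  obtain ⟨e, q, he, hq, rfl⟩ := hx
  set π := Ideal.Quotient.mk (⊥ : Ideal R).jacobson
  have hmk : π e = -π q := by
    rw [eq_neg_iff_add_eq_zero, ← map_add, Ideal.Quotient.eq_zero_iff_mem]
    exact hJ
  have he_mem : e ∈ (⊥ : Ideal R).jacobson := by
    rw [← Ideal.Quotient.eq_zero_iff_mem]
    exact (he.map _).eq_zero_of_isNilpotent (hmk ▸ (hq.map _).neg)
  rw [he.eq_zero_of_mem_jacobson_bot he_mem, zero_add]
  exact hq

theorem IsGNC.isNilpotent_of_mem_jacobson_bot (h : IsGNC R) {x : R}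
    (hJ : x ∈ (⊥ : Ideal R).jacobson) : IsNilpotent x := by
  by_cases hx : IsUnit x
  · have hbot : (⊥ : Ideal R) = ⊤ :=
      Ideal.jacobson_eq_top_iff.mp (Ideal.eq_top_of_isUnit_mem _ hJ hx)
    have hx0 : x = 0 := Ideal.mem_bot.mp (hbot ▸ Submodule.mem_top)
    exact hx0 ▸ IsNilpotent.zero
  · exact (h x hx).isNilpotent_of_mem_jacobson_bot hJ

end

theorem gnc_nil_add_jacobson {R : Type*} [Ring R] (h : IsGNC R) :
    ∀ a b : R, IsNilpotent a → b ∈ ((⊥ : Ideal R).jacobson) → IsNilpotent (a + b) :=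
  fun _ _ ha hb ↦ ha.add_of_mem_of_forall_isNilpotent (fun _ ↦ h.isNilpotent_of_mem_jacobson_bot) hb
end

section
/- Let I be a nil ideal of a ring R. Then R is a GNC ring if and only if R/I is a GNC ring. -/
theorem gnc_iff_quotient_nil_ideal {R : Type*} [Ring R] (I : TwoSidedIdeal R)
    (hI : ∀ x ∈ I, IsNilpotent x) :
    IsGNC R ↔ IsGNC I.ringCon.Quotient := by
  set f : R →+* I.ringCon.Quotient := I.ringCon.mk'
  have hf : Function.Surjective f := Quotient.mk''_surjective
  have hker : ∀ x : R, f x = 0 ↔ x ∈ I := by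
    intro x
    show (x : I.ringCon.Quotient) = (0 : R) ↔ _
    rw [RingCon.eq]
    exact (I.mem_iff x).symm
  -- units lift along nil ideals
  have hunit : ∀ a : R, IsUnit (f a) → IsUnit a := by
    intro a ha
    obtain ⟨u, hu⟩ := ha
    obtain ⟨b, hb⟩ := hf u.inv
    have h1 : f (1 - a * b) = 0 := by
      rw [map_sub, map_mul, map_one, hb, ← hu, u.val_inv, sub_self]
    have h2 : f (1 - b * a) = 0 := by
      rw [map_sub, map_mul, map_one, hb, ← hu, u.inv_val, sub_self]
    have u1 : IsUnit (a * b) := by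
      have := (hI _ ((hker _).1 h1)).isUnit_one_sub
      simpa using this
    have u2 : IsUnit (b * a) := by
      have := (hI _ ((hker _).1 h2)).isUnit_one_sub
      simpa using this
    obtain ⟨v1, hv1⟩ := u1
    obtain ⟨v2, hv2⟩ := u2
    refine isUnit_iff_exists.2 ⟨b * ↑v1⁻¹, ?_, ?_⟩
    · rw [← mul_assoc, ← hv1, Units.mul_inv]
    · have hrc : a * (b * ↑v1⁻¹) = 1 := by rw [← mul_assoc, ← hv1, Units.mul_inv]
      have hlc : (↑v2⁻¹ * b) * a = 1 := by rw [mul_assoc, ← hv2, Units.inv_mul]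
      have : ↑v2⁻¹ * b = b * ↑v1⁻¹ := by
        calc ↑v2⁻¹ * b = (↑v2⁻¹ * b) * (a * (b * ↑v1⁻¹)) := by rw [hrc, mul_one]
          _ = ((↑v2⁻¹ * b) * a) * (b * ↑v1⁻¹) := by noncomm_ring
          _ = b * ↑v1⁻¹ := by rw [hlc, one_mul]
      rw [← this, hlc]
  have hkernil : ∀ x ∈ RingHom.ker f, IsNilpotent x := by
    intro x hx
    exact hI x ((hker x).1 (by simpa [RingHom.mem_ker] using hx))
  constructor
  · -- forward
    intro h a ha
    obtain ⟨b, rfl⟩ := hf a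
    obtain ⟨e, q, he, hq, heq⟩ := h b (fun hb => ha (hb.map f))
    exact ⟨f e, f q, by simpa [IsIdempotentElem, ← map_mul] using congrArg f he.eq,
      hq.map f, by rw [heq, map_add]⟩
  · -- backward
    intro h a ha
    have haq : ¬ IsUnit (f a) := fun hu => ha (hunit a hu)
    obtain ⟨e, q, he, hq, heq⟩ := h (f a) haq
    obtain ⟨e', he', hfe⟩ := exists_isIdempotentElem_eq_of_ker_isNilpotent f hkernil e
      ⟨_, (hf e).choose_spec⟩ he
    refine ⟨e', a - e', he', ?_, by abel⟩
    -- f (a - e') = q is nilpotent, so (a-e')^n ∈ I, hence nilpotent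
    have hfq : f (a - e') = q := by rw [map_sub, hfe, heq]; abel
    obtain ⟨n, hn⟩ := hq
    have : (a - e') ^ n ∈ I := (hker _).1 (by rw [map_pow, hfq, hn])
    obtain ⟨m, hm⟩ := hI _ this
    exact ⟨n * m, by rw [pow_mul, hm]⟩
end

section
/- Let R be a ring whose only idempotents are 0 and 1. Then R is GNC if and only if R is a local ring with nil Jacobson radical. -/
/-! If every non-unit is nil-clean and the only idempotents are `0` and `1`, a non-unit `e + q`
must have `e = 0` (as `1 + q` is a unit), so every non-unit is nilpotent; this forces locality and
a nil Jacobson radical. Conversely, in a local ring a non-unit `a` has `y * a` a non-unit for every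
`y` (a left inverse is two-sided when the idempotents are trivial), so `1 + y * a` is a unit and
`a` lies in the Jacobson radical; hence `a = 0 + a` is nil-clean. -/

/-- If `a * b = 1` then `b * a` is idempotent, and it can be `0` only in the zero ring. -/
theorem IsDedekindFiniteMonoid.of_isIdempotentElem_eq_zero_or_one {M : Type*} [MonoidWithZero M]
    (h : ∀ e : M, IsIdempotentElem e → e = 0 ∨ e = 1) : IsDedekindFiniteMonoid M where
  mul_eq_one_symm {a b} hab := by
    have hidem : IsIdempotentElem (b * a) := by
      rw [IsIdempotentElem, mul_assoc, ← mul_assoc a, hab, one_mul]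
    rcases h _ hidem with hba | hba
    · have : (0 : M) = 1 := by
        rw [← mul_zero a, ← zero_mul b, ← hba, mul_assoc, ← mul_assoc a, hab, one_mul]
      have := subsingleton_of_zero_eq_one this
      exact Subsingleton.elim _ _
    · exact hba

theorem IsNilClean.isNilpotent_of_not_isUnit {R : Type*} [Ring R]
    (h : ∀ e : R, IsIdempotentElem e → e = 0 ∨ e = 1) {a : R} (ha : IsNilClean a)
    (hu : ¬IsUnit a) : IsNilpotent a := by
  obtain ⟨e, q, he, hq, rfl⟩ := ha
  rcases h e he with rfl | rfl
  · simpa using hq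
  · exact absurd hq.isUnit_one_add hu

theorem IsLocalRing.of_isNilpotent_of_not_isUnit {R : Type*} [Ring R] [Nontrivial R]
    (h : ∀ a : R, ¬IsUnit a → IsNilpotent a) : IsLocalRing R :=
  of_isUnit_or_isUnit_one_sub_self fun a => or_iff_not_imp_left.2 fun ha => (h a ha).isUnit_one_sub

theorem not_isUnit_of_mem_jacobson_bot {R : Type*} [Ring R] [Nontrivial R] {x : R}
    (hx : x ∈ (⊥ : Ideal R).jacobson) : ¬IsUnit x := fun hu =>
  (Ring.jacobson_lt_top R).ne <| by
    rw [← Ideal.jacobson_bot]; exact Ideal.eq_top_of_isUnit_mem _ hx hu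

theorem IsLocalRing.mem_jacobson_bot_of_not_isUnit {R : Type*} [Ring R] [IsLocalRing R]
    [IsDedekindFiniteMonoid R] {a : R} (ha : ¬IsUnit a) : a ∈ (⊥ : Ideal R).jacobson := by
  refine Ideal.mem_jacobson_iff.2 fun y => ?_
  have hya : ¬IsUnit (-(y * a)) := by
    rw [IsUnit.neg_iff]; exact fun hu => ha (isUnit_of_mul_isUnit_right hu)
  obtain ⟨u, hu⟩ :=
    (isUnit_or_isUnit_of_add_one (neg_add_cancel_left (y * a) 1)).resolve_left hya
  refine ⟨↑u⁻¹, ?_⟩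
  rw [Ideal.mem_bot, mul_assoc, ← mul_add_one, ← hu, Units.inv_mul, sub_self]

theorem gnc_iff_local_of_trivial_idempotents {R : Type*} [Ring R] [Nontrivial R]
    (h : ∀ e : R, IsIdempotentElem e → e = 0 ∨ e = 1) :
    IsGNC R ↔ (IsLocalRing R ∧ ∀ x ∈ ((⊥ : Ideal R).jacobson), IsNilpotent x) := by
  constructor
  · intro hgnc
    have hnil (a : R) (ha : ¬IsUnit a) : IsNilpotent a :=
      (hgnc a ha).isNilpotent_of_not_isUnit h ha
    exact ⟨.of_isNilpotent_of_not_isUnit hnil,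
      fun x hx => hnil x (not_isUnit_of_mem_jacobson_bot hx)⟩
  · rintro ⟨hloc, hjac⟩ a ha
    have := IsDedekindFiniteMonoid.of_isIdempotentElem_eq_zero_or_one h
    exact ⟨0, a, .zero, hjac a (IsLocalRing.mem_jacobson_bot_of_not_isUnit ha),
      (zero_add a).symm⟩
end

section
/- Let n ≥ 2 and let D be a division ring with an element a ∉ {0, 1}. Then the matrix ring M_n(D) is not a GNC ring (the matrix with a in the (1,1) entry and zeros elsewhere is neither a unit nor nil-clean). -/
open Matrix
open scoped RightActions

theorem IsNilpotent.zero_mem_of_smul_mem {R V : Type*} [MonoidWithZero R] [Zero V]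
    [MulActionWithZero R V] {q : R} (hq : IsNilpotent q) {S : Set V}
    (hS : ∀ w ∈ S, q • w ∈ S) (hne : S.Nonempty) : (0 : V) ∈ S := by
  obtain ⟨N, hN⟩ := hq
  obtain ⟨w, hw⟩ := hne
  have hpow : ∀ k : ℕ, q ^ k • w ∈ S := fun k ↦ by
    induction k with
    | zero => simpa using hw
    | succ k ih => simpa [pow_succ', mul_smul] using hS _ ih
  simpa [hN] using hpow N

theorem IsNilpotent.eq_zero_of_smul_eq_op_smul {R D V : Type*} [MonoidWithZero R]
    [DivisionRing D] [AddCommMonoid V] [Module Dᵐᵒᵖ V] [MulActionWithZero R V]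
    [SMulCommClass R Dᵐᵒᵖ V] {q : R} (hq : IsNilpotent q) {w : V} (hw : w ≠ 0) {μ : D}
    (h : q • w = w <• μ) : μ = 0 := by
  by_contra hμ
  obtain ⟨x, hx, hwx⟩ := hq.zero_mem_of_smul_mem
    (S := {u | ∃ x : D, x ≠ 0 ∧ u = w <• x})
    (fun _ ⟨x, hx, hu⟩ ↦
      ⟨μ * x, mul_ne_zero hμ hx, by rw [hu, smul_comm, h, op_smul_op_smul]⟩)
    ⟨w, 1, one_ne_zero, by simp⟩
  exact hx (by simpa [hw] using hwx.symm)

theorem Matrix.not_isUnit_of_row_eq_zero {m R : Type*} [Fintype m] [DecidableEq m] [Semiring R]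
    [Nontrivial R] {A : Matrix m m R} {j : m} (h : A.row j = 0) : ¬ IsUnit A := fun hA ↦ by
  have := vecMul_injective_of_isUnit hA (a₁ := Pi.single j 1) (a₂ := 0) (by simp [h])
  simpa using congrFun this j

theorem Matrix.row_single_of_ne {m n R : Type*} [DecidableEq m] [DecidableEq n] [Zero R]
    {i k : m} (hk : k ≠ i) (j : n) (a : R) : (single i j a).row k = 0 := by
  ext l
  simp [single, hk.symm]

theorem IsIdempotentElem.mulVec_col {n R : Type*} [Fintype n] [DecidableEq n] [Semiring R]
    {e : Matrix n n R} (he : IsIdempotentElem e) (i : n) : e *ᵥ e.col i = e.col i := by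
  rw [← mulVec_single_one, mulVec_mulVec, he.eq]

section SingleSubIdempotent

variable {ι D : Type*} [Fintype ι] [DecidableEq ι] [DivisionRing D] {i : ι} {a : D}
  {e : Matrix ι ι D}

theorem Matrix.single_sub_mulVec_single (x : D) :
    (single i i a - e) *ᵥ Pi.single i x = Pi.single i (a * x) - e.col i <• x := by
  rw [sub_mulVec, single_mulVec, mulVec_single, Pi.single_eq_same]
  rfl

theorem Matrix.single_sub_mulVec_col (he : IsIdempotentElem e) :
    (single i i a - e) *ᵥ e.col i = Pi.single i (a * e i i) - e.col i := by
  rw [sub_mulVec, single_mulVec, he.mulVec_col]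
  rfl

theorem Matrix.single_sub_mulVec_single_add_col (he : IsIdempotentElem e) (x y : D) :
    (single i i a - e) *ᵥ (Pi.single i x + e.col i <• y)
      = Pi.single i (a * (x + e i i * y)) + e.col i <• -(x + y) := by
  rw [mulVec_add, mulVec_smul, single_sub_mulVec_single, single_sub_mulVec_col he]
  ext k
  by_cases hk : k = i
  · subst hk
    simp only [Pi.add_apply, Pi.sub_apply, Pi.smul_apply, op_smul_eq_mul, col_apply,
      Pi.single_eq_same]
    noncomm_ring
  · simp only [Pi.add_apply, Pi.sub_apply, Pi.smul_apply, op_smul_eq_mul, col_apply,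
      Pi.single_eq_of_ne hk]
    noncomm_ring

theorem Matrix.eq_zero_or_one_of_col_eq_single (he : IsIdempotentElem e)
    (hN : IsNilpotent (single i i a - e)) (hcol : e.col i = Pi.single i (e i i)) :
    a = 0 ∨ a = 1 := by
  have hc : IsIdempotentElem (e i i) := by
    simpa [hcol, IsIdempotentElem] using congrFun (he.mulVec_col i) i
  have hv : (single i i a - e) • (Pi.single i 1 : ι → D)
      = (Pi.single i 1 : ι → D) <• (a - e i i) := by
    rw [smul_eq_mulVec, single_sub_mulVec_single, hcol]
    ext k; by_cases hk : k = i
    · subst hk; simp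
    · simp [hk]
  have := hN.eq_zero_of_smul_eq_op_smul (by simp) hv
  rw [sub_eq_zero] at this
  rwa [this, ← IsIdempotentElem.iff_eq_zero_or_one]

theorem Matrix.eq_one_of_col_apply_ne_zero_of_diag_eq_one (he : IsIdempotentElem e)
    (hN : IsNilpotent (single i i a - e)) {j : ι} (hj : j ≠ i) (hji : e j i ≠ 0)
    (hc : e i i = 1) : a = 1 := by
  set w : ι → D := Pi.single i a + e.col i <• (-1 : D)
  have hw : w ≠ 0 := fun h ↦ hji (by simpa [w, hj] using congrFun h j)
  have hqw : (single i i a - e) • w = w <• (a - 1) := by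
    rw [smul_eq_mulVec, single_sub_mulVec_single_add_col he, hc]
    ext k; by_cases hk : k = i
    · subst hk
      simp only [w, Pi.add_apply, Pi.smul_apply, op_smul_eq_mul, col_apply, Pi.single_eq_same, hc]
      noncomm_ring
    · simp only [w, Pi.add_apply, Pi.smul_apply, op_smul_eq_mul, col_apply, Pi.single_eq_of_ne hk]
      noncomm_ring
  exact sub_eq_zero.mp (hN.eq_zero_of_smul_eq_op_smul hw hqw)

theorem Matrix.eq_zero_of_col_apply_ne_zero_of_diag_ne_one (he : IsIdempotentElem e)
    (hN : IsNilpotent (single i i a - e)) {j : ι} (hj : j ≠ i) (hji : e j i ≠ 0)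
    (hc : e i i ≠ 1) : a = 0 := by
  by_contra ha
  let S : Set (ι → D) :=
    {u | ∃ x y : D, (x ≠ 0 ∨ y ≠ 0) ∧ u = Pi.single i x + e.col i <• y}
  have hS : ∀ u ∈ S, (single i i a - e) • u ∈ S := by
    rintro _ ⟨x, y, hxy, rfl⟩
    refine ⟨a * (x + e i i * y), -(x + y), ?_, single_sub_mulVec_single_add_col he x y⟩
    contrapose! hxy
    have hsum : x + e i i * y = 0 := (mul_eq_zero.mp hxy.1).resolve_left ha
    have hx : x = -y := eq_neg_of_add_eq_zero_left (neg_eq_zero.mp hxy.2)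
    have hy : y = 0 := by
      have : (e i i - 1) * y = 0 := by linear_combination (norm := noncomm_ring) hsum - hx
      exact (mul_eq_zero.mp this).resolve_left (sub_ne_zero.mpr hc)
    exact ⟨by rw [hx, hy, neg_zero], hy⟩
  obtain ⟨x, y, hxy, h⟩ := hN.zero_mem_of_smul_mem hS ⟨_, 1, 0, Or.inl one_ne_zero, rfl⟩
  have hy : y = 0 := by simpa [hj, hji] using congrFun h j
  have hx : x = 0 := by simpa [hy] using (congrFun h i).symm
  exact hxy.elim (· hx) (· hy)

theorem Matrix.eq_zero_or_one_of_isNilClean_single (h : IsNilClean (single i i a)) :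
    a = 0 ∨ a = 1 := by
  obtain ⟨e, q, he, hq, hA⟩ := h
  have hN : IsNilpotent (single i i a - e) := by rwa [hA, add_sub_cancel_left]
  by_cases hcol : e.col i = Pi.single i (e i i)
  · exact eq_zero_or_one_of_col_eq_single he hN hcol
  obtain ⟨j, hji⟩ := Function.ne_iff.mp hcol
  have hj : j ≠ i := by rintro rfl; simp at hji
  rw [col_apply, Pi.single_eq_of_ne hj] at hji
  by_cases hc : e i i = 1
  · exact Or.inr (eq_one_of_col_apply_ne_zero_of_diag_eq_one he hN hj hji hc)
  · exact Or.inl (eq_zero_of_col_apply_ne_zero_of_diag_ne_one he hN hj hji hc)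

end SingleSubIdempotent

theorem matrix_divisionRing_not_gnc {D : Type*} [DivisionRing D] (n : ℕ) (hn : 2 ≤ n)
    (a : D) (h0 : a ≠ 0) (h1 : a ≠ 1) :
    ¬ IsGNC (Matrix (Fin n) (Fin n) D) := by
  intro hGNC
  let i : Fin n := ⟨0, by omega⟩
  have hrow : (single i i a).row ⟨1, by omega⟩ = 0 := row_single_of_ne (by simp [i]) i a
  rcases eq_zero_or_one_of_isNilClean_single (hGNC _ (not_isUnit_of_row_eq_zero hrow)) with h | h
  exacts [h0 h, h1 h]
end

section
/- A ring R is strongly nil-clean if and only if R is both a UU ring and a GNC ring. -/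
open Polynomial

def IsUU (R : Type*) [Ring R] : Prop :=
  ∀ u : R, IsUnit u → ∃ q : R, IsNilpotent q ∧ u = 1 + q

section

variable {R S : Type*} [Ring R] [Ring S]

def IsStronglyNilClean (a : R) : Prop :=
  ∃ e q : R, IsIdempotentElem e ∧ IsNilpotent q ∧ Commute e q ∧ a = e + q

theorem IsStronglyNilClean.isNilClean {a : R} (h : IsStronglyNilClean a) : IsNilClean a :=
  let ⟨e, q, he, hq, _, ha⟩ := h
  ⟨e, q, he, hq, ha⟩

theorem IsStronglyNilClean.exists_isNilpotent_eq_one_add {u : R} (h : IsStronglyNilClean u)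
    (hu : IsUnit u) : ∃ q : R, IsNilpotent q ∧ u = 1 + q := by
  obtain ⟨e, q, he, hq, heq, rfl⟩ := h
  have he_unit : IsUnit e := by
    simpa using hq.neg.isUnit_add_left_of_commute hu (heq.symm.add_right (.refl q)).neg_left
  exact ⟨q, hq, by rw [(IsIdempotentElem.iff_eq_one_of_isUnit he_unit).1 he]⟩

theorem X_sub_X_sq_dvd_X_sub_one_sub_one_sub_pow_pow {n : ℕ} (hn : n ≠ 0) :
    (X - X ^ 2 : ℤ[X]) ∣ X - (1 - (1 - X ^ n) ^ n) := by
  rw [← Ideal.mem_span_singleton, ← Ideal.Quotient.eq_zero_iff_mem]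
  have hx : IsIdempotentElem (Ideal.Quotient.mk (Ideal.span {(X - X ^ 2 : ℤ[X])}) X) := by
    have h := Ideal.Quotient.eq_zero_iff_mem.2 (Ideal.mem_span_singleton_self (X - X ^ 2 : ℤ[X]))
    rw [map_sub, map_pow, sub_eq_zero] at h
    rw [IsIdempotentElem, ← sq, ← h]
  simp only [map_sub, map_one, map_pow]
  rw [hx.pow_eq hn, hx.one_sub.pow_eq hn, sub_sub_cancel, sub_self]

/-- The idempotent `1 - (1 - a ^ n) ^ n` is a polynomial in `a`, congruent to `a` modulo
`a - a ^ 2`. -/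
theorem isStronglyNilClean_of_isNilpotent_sub_sq {a : R} (h : IsNilpotent (a - a ^ 2)) :
    IsStronglyNilClean a := by
  obtain ⟨n, hn⟩ := h
  have hn' : (a - a ^ 2) ^ (n + 1) = 0 := by rw [pow_succ, hn, zero_mul]
  obtain ⟨g, hg⟩ := X_sub_X_sq_dvd_X_sub_one_sub_one_sub_pow_pow n.succ_ne_zero
  refine ⟨1 - (1 - a ^ (n + 1)) ^ (n + 1), a - (1 - (1 - a ^ (n + 1)) ^ (n + 1)),
    isIdempotentElem_one_sub_one_sub_pow_pow a (n + 1) hn', ?_, ?_, (add_sub_cancel _ _).symm⟩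
  · have hcomm : Commute (a - a ^ 2) (aeval a g) := by
      have h := (Commute.all (X - X ^ 2 : ℤ[X]) g).map (aeval a)
      rwa [map_sub, map_pow, aeval_X] at h
    have hdvd : a - (1 - (1 - a ^ (n + 1)) ^ (n + 1)) = (a - a ^ 2) * aeval a g := by
      simpa using congrArg (aeval a) hg
    rw [hdvd]
    exact hcomm.isNilpotent_mul_right ⟨n, hn⟩
  · have h := (Commute.all (1 - (1 - X ^ (n + 1)) ^ (n + 1) : ℤ[X])
      (X - (1 - (1 - X ^ (n + 1)) ^ (n + 1)))).map (aeval a)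
    simp only [map_sub, map_one, map_pow, aeval_X] at h
    exact h

theorem IsUnit.add_two_mul {u : R} (hu : IsUnit u) (h2 : IsNilpotent (2 : R)) (x : R) :
    IsUnit (u + 2 * x) := by
  obtain ⟨u, rfl⟩ := hu
  have h : (u : R) + 2 * x = u * (1 + 2 * (↑u⁻¹ * x)) := by
    rw [mul_add, mul_one, ← mul_assoc, ← (Commute.ofNat_left 2 (u : R)).eq, mul_assoc,
      Units.mul_inv_cancel_left]
  rw [h]
  exact u.isUnit.mul ((Commute.ofNat_left 2 _).isNilpotent_mul_right h2).isUnit_one_add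

theorem IsNilClean.exists_eq_add_isUnit (h2 : IsNilpotent (2 : R)) {a : R} (ha : IsNilClean a) :
    ∃ f u : R, IsIdempotentElem f ∧ IsUnit u ∧ a = f + u := by
  obtain ⟨e, q, he, hq, rfl⟩ := ha
  exact ⟨1 - e, q - 1 + 2 * e, he.one_sub, hq.isUnit_sub_one.add_two_mul h2 e, by noncomm_ring⟩

/-- Nicholson: a clean element has the exchange property. -/
theorem exists_exchange_of_eq_add_isUnit {a f u : R} (hf : IsIdempotentElem f) (hu : IsUnit u)
    (ha : a = f + u) :
    ∃ h c d : R, IsIdempotentElem h ∧ h = c * a ∧ 1 - h = d * (1 - a) := by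
  obtain ⟨u, rfl⟩ := hu
  refine ⟨↑u⁻¹ * (1 - f) * u, ↑u⁻¹ * (1 - f), -(↑u⁻¹ * f), ?_, ?_, ?_⟩
  · rw [IsIdempotentElem]
    simp only [mul_assoc, Units.mul_inv_cancel_left]
    rw [← mul_assoc (1 - f) (1 - f), hf.one_sub.eq]
  · rw [ha, mul_add, mul_assoc _ (1 - f) f, hf.one_sub_mul_self, mul_zero, zero_add]
  · calc 1 - ↑u⁻¹ * (1 - f) * u = (1 - ↑u⁻¹ * u) + ↑u⁻¹ * f * u := by noncomm_ring
      _ = ↑u⁻¹ * f * u := by rw [u.inv_mul, sub_self, zero_add]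
      _ = -(↑u⁻¹ * f) * (1 - (f + u)) - ↑u⁻¹ * (f * f - f) := by noncomm_ring
      _ = -(↑u⁻¹ * f) * (1 - a) := by rw [hf.eq, sub_self, mul_zero, sub_zero, ha]

theorem isUnit_of_isUnit_mul_of_isUnit_mul {M : Type*} [Monoid M] {x y : M} (hxy : IsUnit (x * y))
    (hyx : IsUnit (y * x)) : IsUnit x := by
  have hr : x * (y * ↑hxy.unit⁻¹) = 1 := by rw [← mul_assoc]; exact hxy.mul_val_inv
  have hl : ↑hyx.unit⁻¹ * y * x = 1 := by rw [mul_assoc]; exact hyx.val_inv_mul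
  exact isUnit_iff_exists.2 ⟨_, hr, left_inv_eq_right_inv hl hr ▸ hl⟩

theorem isUnit_one_add_of_mem_jacobson {j : R} (hj : j ∈ Ring.jacobson R) : IsUnit (1 + j) := by
  rw [← Ideal.jacobson_bot, Ideal.mem_jacobson_iff] at hj
  obtain ⟨z, hz⟩ := hj 1
  obtain ⟨z', hz'⟩ := hj (-z)
  rw [Ideal.mem_bot, sub_eq_zero] at hz hz'
  have hzj : z * (1 + j) = 1 := .trans (by noncomm_ring) hz
  have hz'z : z' * z = 1 := by
    calc z' * z = z' * (z * 1 * j + z) - z' * z * j := by noncomm_ring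
      _ = z' * -z * j + z' := by rw [hz]; noncomm_ring
      _ = 1 := hz'
  exact isUnit_iff_exists.2 ⟨z, left_inv_eq_right_inv hz'z hzj ▸ hz'z, hzj⟩

instance isLocalHom_quotientMk_jacobson : IsLocalHom (Ideal.Quotient.mk (Ring.jacobson R)) := by
  refine ⟨fun x hx => ?_⟩
  obtain ⟨y', hxy, hyx⟩ := isUnit_iff_exists.1 hx
  obtain ⟨y, rfl⟩ := Ideal.Quotient.mk_surjective y'
  have key {a b : R} (h : Ideal.Quotient.mk (Ring.jacobson R) (a * b) = 1) : IsUnit (a * b) := by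
    rw [← map_one (Ideal.Quotient.mk _), Ideal.Quotient.eq] at h
    simpa using isUnit_one_add_of_mem_jacobson h
  exact isUnit_of_isUnit_mul_of_isUnit_mul (key (by rw [map_mul, hxy])) (key (by rw [map_mul, hyx]))

theorem IsNilClean.map {a : R} (ha : IsNilClean a) (f : R →+* S) : IsNilClean (f a) := by
  obtain ⟨e, q, he, hq, rfl⟩ := ha
  exact ⟨f e, f q, he.map f, hq.map f, map_add f e q⟩

theorem IsUU.of_surjective (hR : IsUU R) (f : R →+* S) [IsLocalHom f]
    (hf : Function.Surjective f) : IsUU S := by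
  intro u hu
  obtain ⟨u, rfl⟩ := hf u
  obtain ⟨q, hq, rfl⟩ := hR u (hu.of_map f u)
  exact ⟨f q, hq.map f, by rw [map_add, map_one]⟩

theorem IsGNC.of_surjective (hR : IsGNC R) (f : R →+* S) (hf : Function.Surjective f) :
    IsGNC S := by
  intro a ha
  obtain ⟨a, rfl⟩ := hf a
  exact (hR a fun h => ha (h.map f)).map f

namespace IsUU

variable (hR : IsUU R)
include hR

theorem isNilpotent_two : IsNilpotent (2 : R) := by
  obtain ⟨q, hq, h⟩ := hR (-1) isUnit_one.neg
  have : (2 : R) = -q := by rw [← sub_eq_of_eq_add' h]; norm_num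
  exact this ▸ hq.neg

theorem isNilClean (hG : IsGNC R) (a : R) : IsNilClean a := by
  by_cases ha : IsUnit a
  · obtain ⟨q, hq, rfl⟩ := hR a ha
    exact ⟨1, q, .one, hq, rfl⟩
  · exact hG a ha

theorem exists_exchange (hG : IsGNC R) (a : R) :
    ∃ h c d : R, IsIdempotentElem h ∧ h = c * a ∧ 1 - h = d * (1 - a) := by
  obtain ⟨f, u, hf, hu, ha⟩ := (hR.isNilClean hG a).exists_eq_add_isUnit hR.isNilpotent_two
  exact exists_exchange_of_eq_add_isUnit hf hu ha

/-- `(1 + w)(1 + t) = 1 + n` with `n = w + t + wt`, and `n² - n = tw + wt` is an idempotent with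
`w (tw + wt) = w`; so nilpotency of `n` forces `w = 0`. -/
theorem eq_zero_of_matrix_units {w t : R} (hw : w * w = 0) (ht : t * t = 0)
    (hwtw : w * t * w = w) (htwt : t * w * t = t) : w = 0 := by
  have hE : IsIdempotentElem (t * w + w * t) := by
    calc (t * w + w * t) * (t * w + w * t)
        = t * w * t * w + t * (w * w) * t + w * (t * t) * w + w * t * w * t := by noncomm_ring
      _ = t * w + w * t := by rw [htwt, hwtw, hw, ht]; noncomm_ring
  have hunit : IsUnit ((1 + w) * (1 + t)) :=
    (IsNilpotent.isUnit_one_add ⟨2, by rwa [sq]⟩).mul (IsNilpotent.isUnit_one_add ⟨2, by rwa [sq]⟩)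
  obtain ⟨n, hn, hwt⟩ := hR _ hunit
  have hn_eq : n = w + t + w * t := by
    rw [← add_right_inj (1 : R), ← hwt]; noncomm_ring
  have hsq : n * (n - 1) = t * w + w * t := by
    calc n * (n - 1) = t * w + w * t + w * w + w * w * t + t * t + w * (t * t)
          + (t * w * t - t) + (w * t * w - w) + (w * t * w * t - w * t) := by
          rw [hn_eq]; noncomm_ring
      _ = t * w + w * t := by rw [hw, ht, htwt, hwtw]; noncomm_ring
  have hE0 : t * w + w * t = 0 := hE.eq_zero_of_isNilpotent
    (hsq ▸ ((Commute.refl n).sub_right (.one_right n)).isNilpotent_mul_right hn)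
  calc w = w * (t * w + w * t) := by
        rw [mul_add, ← mul_assoc, hwtw, ← mul_assoc, hw, zero_mul, add_zero]
    _ = 0 := by rw [hE0, mul_zero]

theorem eq_zero_of_isIdempotentElem_of_eq_mul {h c p : R} (hh : IsIdempotentElem h)
    (hc : h = c * p) (hp : p * p = 0) : h = 0 := by
  have hhp : h * p = 0 := by rw [hc, mul_assoc, hp, mul_zero]
  have htp : h * c * (1 - h) * p = h := by
    calc h * c * (1 - h) * p = h * (c * p) - h * c * (h * p) := by noncomm_ring
      _ = h := by rw [← hc, hhp, hh.eq, mul_zero, sub_zero]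
  have hht : h * (h * c * (1 - h)) = h * c * (1 - h) := by rw [← mul_assoc, ← mul_assoc, hh.eq]
  have htw : h * c * (1 - h) * (p * h) = h := by rw [← mul_assoc, htp, hh.eq]
  have hw : p * h * (p * h) = 0 := by rw [mul_assoc, ← mul_assoc h, hhp, zero_mul, mul_zero]
  have ht : h * c * (1 - h) * (h * c * (1 - h)) = 0 := by
    calc h * c * (1 - h) * (h * c * (1 - h)) = h * c * ((1 - h) * h) * c * (1 - h) := by
          noncomm_ring
      _ = 0 := by rw [hh.one_sub_mul_self, mul_zero, zero_mul, zero_mul]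
  have hwtw : p * h * (h * c * (1 - h)) * (p * h) = p * h := by
    rw [mul_assoc, htw, mul_assoc, hh.eq]
  have htwt : h * c * (1 - h) * (p * h) * (h * c * (1 - h)) = h * c * (1 - h) := by rw [htw, hht]
  rw [← htw, hR.eq_zero_of_matrix_units hw ht hwtw htwt, mul_zero]

theorem mem_jacobson_of_mul_self_eq_zero (hG : IsGNC R) {p : R} (hp : p * p = 0) :
    p ∈ Ring.jacobson R := by
  rw [← Ideal.jacobson_bot, Ideal.mem_jacobson_iff]
  intro r
  obtain ⟨h, c, d, hh, hca, hd⟩ := hR.exists_exchange hG (-(r * p))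
  have h0 : h = 0 :=
    hR.eq_zero_of_isIdempotentElem_of_eq_mul hh (c := -(c * r)) (by rw [hca]; noncomm_ring) hp
  refine ⟨d, ?_⟩
  rw [h0, sub_zero] at hd
  rw [Ideal.mem_bot, sub_eq_zero, hd]
  noncomm_ring

theorem isReduced_of_jacobson_eq_bot (hG : IsGNC R) (hJ : Ring.jacobson R = ⊥) : IsReduced R :=
  (isReduced_iff_pow_one_lt 2 one_lt_two).2 fun x hx => by
    simpa [hJ] using hR.mem_jacobson_of_mul_self_eq_zero hG (by rwa [← sq])

theorem isIdempotentElem_of_isReduced (hG : IsGNC R) [IsReduced R] (a : R) :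
    IsIdempotentElem a := by
  by_cases ha : IsUnit a
  · obtain ⟨q, hq, rfl⟩ := hR a ha
    rw [hq.eq_zero, add_zero]
    exact .one
  · obtain ⟨e, q, he, hq, rfl⟩ := hG a ha
    rwa [hq.eq_zero, add_zero]

theorem isNilpotent_sub_sq (hG : IsGNC R) (a : R) : IsNilpotent (a - a ^ 2) := by
  have hπ := Ideal.Quotient.mk_surjective (I := Ring.jacobson R)
  have hRq := hR.of_surjective _ hπ
  have hGq := hG.of_surjective _ hπ
  have : IsReduced (R ⧸ Ring.jacobson R) :=
    hRq.isReduced_of_jacobson_eq_bot hGq (Ring.jacobson_quotient_jacobson R)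
  have hJ : a - a ^ 2 ∈ Ring.jacobson R := by
    rw [← Ideal.Quotient.eq_zero_iff_mem, map_sub, map_pow, sq,
      (hRq.isIdempotentElem_of_isReduced hGq _).eq, sub_self]
  obtain ⟨q, hq, hq'⟩ := hR _ (isUnit_one_add_of_mem_jacobson hJ)
  rwa [add_left_cancel hq']

end IsUU

end

theorem stronglyNilClean_iff_uu_and_gnc {R : Type*} [Ring R] :
    (∀ a : R, ∃ e q : R, IsIdempotentElem e ∧ IsNilpotent q ∧ Commute e q ∧ a = e + q) ↔
      ((∀ u : R, IsUnit u → ∃ q : R, IsNilpotent q ∧ u = 1 + q) ∧ IsGNC R) := by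
  refine ⟨fun h => ⟨fun u hu => ?_, fun a _ => ?_⟩, fun ⟨hUU, hGNC⟩ a => ?_⟩
  · exact IsStronglyNilClean.exists_isNilpotent_eq_one_add (h u) hu
  · exact IsStronglyNilClean.isNilClean (h a)
  · exact isStronglyNilClean_of_isNilpotent_sub_sq (IsUU.isNilpotent_sub_sq hUU hGNC a)
end
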